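/- Let Λ be a relatively separated subset of a unimodular lcsc group G and μ a nonzero finite invariant measure on the punctured hull with transverse measure μ₀. Then for every Borel set S ⊆ G with 0 < m(S) < ∞, the reciprocal of the covolume satisfies 1/covol_μ(Λ) = (1/μ(Ω*(Λ))) ∫_{Ω*(Λ)} |P ∩ S|/m(S) dμ(P). -/

import Mathlib

open Pointwise Set MeasureTheory Filter Topology
open scoped ENNReal

set_option linter.unusedSectionVars false
set_option linter.unusedVariables false

variable {G : Type*} [TopologicalSpace G] [Group G] [IsTopologicalGroup G]

/-- The space `C(G)` of closed subsets of `G`. -/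
def CF (G : Type*) [TopologicalSpace G] := {s : Set G // IsClosed s}

/-- The subbasis of the Chabauty–Fell topology on `C(G)`: the sets
`O_K = {C | C ∩ K = ∅}` for `K` compact and `O^V = {C | C ∩ V ≠ ∅}` for `V` open. -/
def FellBasis (G : Type*) [TopologicalSpace G] : Set (Set (CF G)) :=
  {U | ∃ K : Set G, IsCompact K ∧ U = {C : CF G | C.1 ∩ K = ∅}} ∪
  {U | ∃ V : Set G, IsOpen V ∧ U = {C : CF G | (C.1 ∩ V).Nonempty}}

/-- The Chabauty–Fell topology. -/
instance : TopologicalSpace (CF G) := TopologicalSpace.generateFrom (FellBasis G)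

/-- Left translation of a closed set. -/
noncomputable def CF.smul (x : G) (C : CF G) : CF G := ⟨x • C.1, C.2.smul x⟩

/-- The hull of a point set `Λ`: the Chabauty–Fell closure of the set of left
translates of `Λ`. -/
def hullSet (Λ : Set G) : Set (CF G) := closure {C : CF G | ∃ x : G, C.1 = x • Λ}

/-- The punctured hull `Ω*(Λ)`: the hull minus the empty set. -/
def phull (Λ : Set G) : Set (CF G) := {C ∈ hullSet Λ | C.1.Nonempty}

/-- The transversal `Ω₀(Λ) = {P ∈ hull : e ∈ P}`. -/
def transv (Λ : Set G) : Set (CF G) := {C ∈ hullSet Λ | (1 : G) ∈ C.1}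

/-- `Λ` is relatively separated: `sup_x |Λ ∩ xU| < ∞` for some nonempty open `U`. -/
def RelSep (Λ : Set G) : Prop :=
  ∃ U : Set G, IsOpen U ∧ U.Nonempty ∧ ∃ ℓ : ℕ, ∀ x : G, (Λ ∩ x • U).encard ≤ ℓ

/-- `Λ` is separated: `|Λ ∩ xU| ≤ 1` for all `x` for some open identity neighborhood. -/
def Separated (Λ : Set G) : Prop :=
  ∃ U : Set G, IsOpen U ∧ (1 : G) ∈ U ∧ ∀ x : G, (Λ ∩ x • U).encard ≤ 1

lemma smul_inter_empty (x : G) (s K : Set G) : (x • s) ∩ K = ∅ ↔ s ∩ (x⁻¹ • K) = ∅ := by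
  have h : (x • s) ∩ K = x • (s ∩ x⁻¹ • K) := by
    rw [Set.smul_set_inter, smul_inv_smul]
  rw [h, Set.smul_set_eq_empty]

lemma smul_inter_nonempty (x : G) (s V : Set G) :
    ((x • s) ∩ V).Nonempty ↔ (s ∩ (x⁻¹ • V)).Nonempty := by
  have h : (x • s) ∩ V = x • (s ∩ x⁻¹ • V) := by
    rw [Set.smul_set_inter, smul_inv_smul]
  rw [h, Set.smul_set_nonempty]

/-- Left translation is continuous for the Chabauty–Fell topology. -/
lemma continuous_CFsmul (x : G) : Continuous (fun C : CF G => CF.smul x C) := by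
  apply continuous_generateFrom_iff.mpr
  rintro U (⟨K, hK, rfl⟩ | ⟨V, hV, rfl⟩)
  · have h : (fun C : CF G => CF.smul x C) ⁻¹' {C : CF G | C.1 ∩ K = ∅}
        = {C : CF G | C.1 ∩ (x⁻¹ • K) = ∅} := by
      ext C; exact smul_inter_empty x C.1 K
    rw [h]
    exact TopologicalSpace.isOpen_generateFrom_of_mem (Or.inl ⟨x⁻¹ • K, hK.smul x⁻¹, rfl⟩)
  · have h : (fun C : CF G => CF.smul x C) ⁻¹' {C : CF G | (C.1 ∩ V).Nonempty}
        = {C : CF G | (C.1 ∩ (x⁻¹ • V)).Nonempty} := by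
      ext C; exact smul_inter_nonempty x C.1 V
    rw [h]
    exact TopologicalSpace.isOpen_generateFrom_of_mem (Or.inr ⟨x⁻¹ • V, hV.smul x⁻¹, rfl⟩)

/-- The hull is invariant under left translations. -/
lemma smul_mem_hullSet {Λ : Set G} {C : CF G} (h : C ∈ hullSet Λ) (x : G) :
    CF.smul x C ∈ hullSet Λ := by
  refine map_mem_closure (continuous_CFsmul x) h ?_
  rintro D ⟨y, hy⟩
  exact ⟨x * y, by simp [CF.smul, hy, mul_smul]⟩

lemma one_mem_smul {G : Type*} [TopologicalSpace G] [Group G] [IsTopologicalGroup G]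
    {x : G} {s : Set G} (h : x⁻¹ ∈ s) : (1 : G) ∈ x • s :=
  Set.mem_smul_set.mpr ⟨x⁻¹, h, by simp⟩

/-- The groupoid `G(Λ)` of a point set: pairs `(x, P)` with `P` in the transversal and
`x⁻¹ ∈ P` (so that both `P` and `xP` contain the identity). -/
def Deloid {G : Type*} [TopologicalSpace G] [Group G] [IsTopologicalGroup G] (Λ : Set G) :
    Set (G × CF G) :=
  {p | p.2 ∈ transv Λ ∧ (p.1)⁻¹ ∈ p.2.1}

/-- The source map of the groupoid `G(Λ)`: `s(x, P) = P`. -/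
def deloidSource {G : Type*} [TopologicalSpace G] [Group G] [IsTopologicalGroup G] (Λ : Set G)
    (p : ↥(Deloid Λ)) : ↥(transv Λ) := ⟨p.1.2, p.2.1⟩

/-- The range map of the groupoid `G(Λ)`: `r(x, P) = xP`. -/
noncomputable def deloidRange {G : Type*} [TopologicalSpace G] [Group G] [IsTopologicalGroup G]
    (Λ : Set G) (p : ↥(Deloid Λ)) : ↥(transv Λ) :=
  ⟨CF.smul p.1.1 p.1.2, smul_mem_hullSet p.2.1.1 p.1.1, one_mem_smul p.2.2⟩

noncomputable instance {G : Type*} [TopologicalSpace G] : MeasurableSpace (CF G) := borel _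

instance {G : Type*} [TopologicalSpace G] : BorelSpace (CF G) := ⟨rfl⟩

/-- The `G`-action on the punctured hull by left translation. -/
noncomputable def phullSmul {G : Type*} [TopologicalSpace G] [Group G] [IsTopologicalGroup G]
    (Λ : Set G) (x : G) (P : ↥(phull Λ)) : ↥(phull Λ) :=
  ⟨CF.smul x P.1, smul_mem_hullSet P.2.1 x, P.2.2.smul_set⟩

/-- A measure on the punctured hull is `G`-invariant if it is preserved by all
translations. -/
def IsInvariantMeasure {G : Type*} [TopologicalSpace G] [Group G] [IsTopologicalGroup G]
    (Λ : Set G) (μ : Measure ↥(phull Λ)) : Prop :=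
  ∀ x : G, Measure.map (phullSmul Λ x) μ = μ

/-- For `P` in the punctured hull and a point `x ∈ P`, the translate `x⁻¹P` belongs to the
transversal `Ω₀(Λ)`. -/
noncomputable def ptMap {G : Type*} [TopologicalSpace G] [Group G] [IsTopologicalGroup G]
    {Λ : Set G} (P : ↥(phull Λ)) (x : ↥(P.1.1)) : ↥(transv Λ) :=
  ⟨CF.smul (↑x : G)⁻¹ P.1, smul_mem_hullSet P.2.1 _,
    Set.mem_smul_set.mpr ⟨(↑x : G), x.2, by simp⟩⟩

/-- `μ₀` is the transverse measure of `μ`: for all `F ∈ C_c(G × Ω₀(Λ))`,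
`∫_{Ω*(Λ)} Σ_{x∈P} F(x, x⁻¹P) dμ(P) = ∫_{Ω₀(Λ)} ∫_G F(x,Q) dx dμ₀(Q)`. -/
def IsTransverseMeasure {G : Type*} [TopologicalSpace G] [Group G] [IsTopologicalGroup G]
    [MeasurableSpace G] (m : Measure G) (Λ : Set G)
    (μ : Measure ↥(phull Λ)) (μ₀ : Measure ↥(transv Λ)) : Prop :=
  ∀ F : G × ↥(transv Λ) → ℝ, Continuous F → HasCompactSupport F →
    (∫ P : ↥(phull Λ), (∑' x : ↥(P.1.1), F ((↑x : G), ptMap P x)) ∂μ) =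
      ∫ Q : ↥(transv Λ), (∫ y : G, F (y, Q) ∂m) ∂μ₀


/-!
Consider the intensity measure `ν(s) = ∫ |P ∩ s| dμ(P)` on `G`. Invariance of `μ` makes `ν`
left invariant, and relative separation (which passes from `Λ` to its whole hull) makes
it finite on compacts, so `ν = c • m` by uniqueness of Haar measure. Testing the transverse
identity against `F(x, Q) = f(x)` gives `c ∫ f dm = μ₀(Ω₀) ∫ f dm`, so `c = μ₀(Ω₀)`, and
`∫ |P ∩ S| / m(S) dμ(P) = ν(S) / m(S) = μ₀(Ω₀)`.
-/

theorem Set.encard_le_encard_of_pairwiseDisjoint {X : Type*} {s t : Set X} {W : X → Set X}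
    (hW : s.PairwiseDisjoint W) (ht : ∀ p ∈ s, (t ∩ W p).Nonempty) : s.encard ≤ t.encard := by
  choose! q hq using ht
  refine encard_le_encard_of_injOn (fun p hp => (hq p hp).1) fun p hp p' hp' hqq => ?_
  by_contra hne
  exact (hW hp hp' hne).ne_of_mem (hq p hp).2 (hqq ▸ (hq p' hp').2) rfl

theorem HasCompactSupport.comp_fst {X Y : Type*} [TopologicalSpace X] [TopologicalSpace Y]
    [CompactSpace Y] {f : X → ℝ} (hf : HasCompactSupport f) :
    HasCompactSupport fun p : X × Y => f p.1 :=
  .intro' (hf.prod isCompact_univ) ((isClosed_tsupport f).prod isClosed_univ) fun _ hp =>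
    image_eq_zero_of_notMem_tsupport fun h => hp ⟨h, mem_univ _⟩

namespace CF

variable {X : Type*} [TopologicalSpace X]

theorem isOpen_setOf_inter_nonempty {V : Set X} (hV : IsOpen V) :
    IsOpen {C : CF X | (C.1 ∩ V).Nonempty} :=
  TopologicalSpace.isOpen_generateFrom_of_mem (Or.inr ⟨V, hV, rfl⟩)

theorem isOpen_setOf_inter_eq_empty {K : Set X} (hK : IsCompact K) :
    IsOpen {C : CF X | C.1 ∩ K = ∅} :=
  TopologicalSpace.isOpen_generateFrom_of_mem (Or.inl ⟨K, hK, rfl⟩)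

theorem isClosed_setOf_mem (x : X) : IsClosed {C : CF X | x ∈ C.1} := by
  convert (isOpen_setOf_inter_eq_empty (isCompact_singleton (x := x))).isClosed_compl using 1
  ext C
  simp [Set.eq_empty_iff_forall_notMem]

/-- Alexander's subbasis theorem: in a cover by subbasic sets, the closed set missing every
open set `V` of a hitting set `{C | C ∩ V ≠ ∅}` of the cover lies in some missing set
`{C | C ∩ K = ∅}`, so finitely many of those `V` cover the compact set `K`. -/
instance compactSpace : CompactSpace (CF X) := by
  refine compactSpace_generateFrom rfl fun P hPS hP => ?_
  set 𝒱 : Set (Set X) := {V | IsOpen V ∧ {C : CF X | (C.1 ∩ V).Nonempty} ∈ P}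
  let C₀ : CF X := ⟨(⋃₀ 𝒱)ᶜ, (isOpen_sUnion fun V hV => hV.1).isClosed_compl⟩
  obtain ⟨p, hpP, hC₀p⟩ := mem_sUnion.mp (hP ▸ mem_univ C₀)
  rcases hPS hpP with ⟨K, hK, rfl⟩ | ⟨V, hV, rfl⟩
  · have hK𝒱 : K ⊆ ⋃ V ∈ 𝒱, V := by
      rw [← sUnion_eq_biUnion]
      intro x hx
      by_contra hx𝒱
      exact (eq_empty_iff_forall_notMem.mp hC₀p) x ⟨hx𝒱, hx⟩
    obtain ⟨𝒲, h𝒲𝒱, h𝒲, hK𝒲⟩ := hK.elim_finite_subcover_image (fun V hV => hV.1) hK𝒱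
    refine ⟨insert {C | C.1 ∩ K = ∅} ((fun V => {C : CF X | (C.1 ∩ V).Nonempty}) '' 𝒲),
      insert_subset hpP (image_subset_iff.mpr fun V hV => (h𝒲𝒱 hV).2), (h𝒲.image _).insert _,
      eq_univ_of_forall fun C => ?_⟩
    obtain hCK | ⟨x, hxC, hxK⟩ := (C.1 ∩ K).eq_empty_or_nonempty
    · exact mem_sUnion_of_mem hCK (mem_insert _ _)
    · obtain ⟨V, hV𝒲, hxV⟩ := mem_iUnion₂.mp (hK𝒲 hxK)
      exact mem_sUnion_of_mem (show C ∈ {C : CF X | (C.1 ∩ V).Nonempty} from ⟨x, hxC, hxV⟩)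
        (mem_insert_of_mem _ ⟨V, hV𝒲, rfl⟩)
  · obtain ⟨x, hx𝒱, hxV⟩ := hC₀p
    exact (hx𝒱 (mem_sUnion_of_mem hxV (show V ∈ 𝒱 from ⟨hV, hpP⟩))).elim

theorem lowerSemicontinuous_encard_inter [T2Space X] {V : Set X} (hV : IsOpen V) :
    LowerSemicontinuous fun C : CF X => (C.1 ∩ V).encard := by
  intro C y hy
  have hy' : y ≠ ⊤ := hy.ne_top
  obtain ⟨F, hFC, hFcard⟩ := exists_subset_encard_eq (Order.add_one_le_of_lt hy)
  have hF : F.Finite := encard_ne_top_iff.mp (by simp [hFcard, hy'])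
  obtain ⟨W, hW, hWF⟩ := hF.t2_separation
  have hnhds : ∀ᶠ D in 𝓝 C, ∀ p ∈ F, (D.1 ∩ (W p ∩ V)).Nonempty :=
    (hF.eventually_all).mpr fun p hp => (isOpen_setOf_inter_nonempty ((hW p).2.inter hV)).mem_nhds
      ⟨p, (hFC hp).1, (hW p).1, (hFC hp).2⟩
  filter_upwards [hnhds] with D hD
  calc y < F.encard := hFcard ▸ ENat.lt_add_one_iff hy' |>.mpr le_rfl
    _ ≤ (D.1 ∩ V).encard := encard_le_encard_of_pairwiseDisjoint hWF fun p hp =>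
        (hD p hp).mono fun z hz => ⟨⟨hz.1, hz.2.2⟩, hz.2.1⟩

theorem measurable_encard_inter [T2Space X] {V : Set X} (hV : IsOpen V) :
    Measurable fun C : CF X => ((C.1 ∩ V).encard : ℝ≥0∞) :=
  (ENat.continuous_toENNReal.comp_lowerSemicontinuous (lowerSemicontinuous_encard_inter hV)
    ENat.toENNReal_mono).measurable

section Counting

variable [MeasurableSpace X] [BorelSpace X]

noncomputable def countMeasure (C : CF X) : Measure X := Measure.count.restrict C.1

theorem countMeasure_apply (C : CF X) {s : Set X} (hs : MeasurableSet s) :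
    C.countMeasure s = (C.1 ∩ s).encard := by
  rw [countMeasure, Measure.restrict_apply hs, Measure.count_apply (hs.inter C.2.measurableSet),
    inter_comm]

theorem lintegral_countMeasure (C : CF X) {g : X → ℝ≥0∞} (hg : Measurable g) :
    ∫⁻ x, g x ∂C.countMeasure = ∑' x : C.1, g x := by
  rw [countMeasure, ← lintegral_indicator C.2.measurableSet, lintegral_count'
    (hg.indicator C.2.measurableSet), tsum_subtype]

variable [T2Space X] {α : Type*} [MeasurableSpace α] {f : α → CF X}

-- The π-system argument needs finite measures, hence the restriction to a window `W`.
theorem measurable_countMeasure_restrict (hf : Measurable f) {W : Set X} (hW : IsOpen W)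
    (hfin : ∀ a, ((f a).1 ∩ W).Finite) :
    Measurable fun a => (f a).countMeasure.restrict W := by
  have hW' := hW.measurableSet
  have : ∀ a, IsFiniteMeasure ((f a).countMeasure.restrict W) := fun a => ⟨by
    rw [Measure.restrict_apply_univ, countMeasure_apply _ hW']
    exact ENat.toENNReal_lt_top.mpr (hfin a).encard_lt_top⟩
  refine .measure_of_isPiSystem BorelSpace.measurable_eq isPiSystem_isOpen (fun s hs => ?_) ?_
  · simp_rw [Measure.restrict_apply hs.measurableSet,
      countMeasure_apply _ (hs.measurableSet.inter hW')]
    exact (measurable_encard_inter (hs.inter hW)).comp hf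
  · simp_rw [Measure.restrict_apply_univ, countMeasure_apply _ hW']
    exact (measurable_encard_inter hW).comp hf

theorem measurable_countMeasure (hf : Measurable f) {W : ℕ → Set X} (hW : ∀ n, IsOpen (W n))
    (hcover : ⋃ n, W n = univ) (hfin : ∀ n a, ((f a).1 ∩ W n).Finite) :
    Measurable fun a => (f a).countMeasure := by
  have hD : ∀ n, MeasurableSet (disjointed W n) :=
    .disjointed fun n => (hW n).measurableSet
  refine Measure.measurable_of_measurable_coe _ fun s hs => ?_
  have hsplit : ∀ a, (f a).countMeasure s =
      ∑' n, (f a).countMeasure.restrict (W n) (s ∩ disjointed W n) := by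
    intro a
    conv_lhs => rw [← inter_univ s, ← hcover, ← iUnion_disjointed, inter_iUnion]
    rw [measure_iUnion ((disjoint_disjointed W).mono fun _ _ => .mono inter_subset_right
      inter_subset_right) fun n => hs.inter (hD n)]
    refine tsum_congr fun n => ?_
    rw [Measure.restrict_apply (hs.inter (hD n)),
      inter_eq_left.mpr (inter_subset_right.trans (disjointed_subset W n))]
  simp_rw [hsplit]
  exact .tsum fun n => (Measure.measurable_coe (hs.inter (hD n))).comp
    (measurable_countMeasure_restrict hf (hW n) (hfin n))

end Counting

end CF

theorem DenseRange.iUnion_smul_eq_univ {ι : Type*} {u : ι → G} (hu : DenseRange u) {U : Set G}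
    (hU : IsOpen U) (hne : U.Nonempty) : ⋃ i, u i • U = univ := by
  refine eq_univ_of_forall fun x => mem_iUnion.mpr ?_
  obtain ⟨v, hv⟩ := hne
  obtain ⟨i, hi⟩ := hu.exists_mem_open (hU.preimage (continuous_inv.mul continuous_const :
    Continuous fun g : G => g⁻¹ * x)) ⟨x * v⁻¹, by simpa using hv⟩
  exact ⟨i, mem_smul_set_iff_inv_smul_mem.mpr hi⟩

theorem encard_inter_smul_le_of_mem_hullSet [T2Space G] {Λ U : Set G} (hU : IsOpen U) {ℓ : ℕ∞}
    (hΛ : ∀ x : G, (Λ ∩ x • U).encard ≤ ℓ) {C : CF G} (hC : C ∈ hullSet Λ) (x : G) :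
    (C.1 ∩ x • U).encard ≤ ℓ := by
  have hclosed : IsClosed {C : CF G | ∀ x : G, (C.1 ∩ x • U).encard ≤ ℓ} := by
    simp only [ofPred_forall]
    exact isClosed_iInter fun x =>
      (CF.lowerSemicontinuous_encard_inter (hU.smul x)).isClosed_preimage ℓ
  refine closure_minimal ?_ hclosed hC x
  rintro _ ⟨y, hy⟩ x
  rw [hy, ← smul_inv_smul y (x • U), ← smul_set_inter, encard_smul_set, smul_smul]
  exact hΛ _

theorem isClosed_transv {H : Type*} [TopologicalSpace H] [Group H] (Λ : Set H) :
    IsClosed (transv Λ) :=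
  isClosed_closure.inter (CF.isClosed_setOf_mem 1)

theorem measurable_phullSmul {Λ : Set G} (x : G) : Measurable (phullSmul Λ x) :=
  (((continuous_CFsmul x).comp continuous_subtype_val).subtype_mk _).measurable

theorem IsTransverseMeasure.integral_tsum_eq [MeasurableSpace G] {Λ : Set G} {m : Measure G}
    {μ : Measure (phull Λ)} {μ₀ : Measure (transv Λ)}
    (h : IsTransverseMeasure m Λ μ μ₀) {f : G → ℝ} (hf : Continuous f)
    (hfc : HasCompactSupport f) :
    ∫ P, ∑' x : P.1.1, f x ∂μ = μ₀.real univ * ∫ x, f x ∂m := by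
  have : CompactSpace (transv Λ) := isCompact_iff_compactSpace.mp (isClosed_transv Λ).isCompact
  simpa only [integral_const, smul_eq_mul] using
    h (fun p => f p.1) (hf.comp continuous_fst) hfc.comp_fst

section Intensity

variable [MeasurableSpace G] [BorelSpace G]

noncomputable def intensity {Λ : Set G} (μ : Measure (phull Λ)) : Measure G :=
  μ.bind fun P => P.1.countMeasure

variable [T2Space G] [SecondCountableTopology G] {Λ : Set G} {μ : Measure (phull Λ)}

theorem measurable_countMeasure_phull (hΛ : RelSep Λ) :
    Measurable fun P : phull Λ => P.1.countMeasure := by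
  obtain ⟨U, hU, hne, ℓ, hℓ⟩ := hΛ
  refine CF.measurable_countMeasure measurable_subtype_coe
    (fun n => hU.smul (TopologicalSpace.denseSeq G n))
    ((TopologicalSpace.denseRange_denseSeq G).iUnion_smul_eq_univ hU hne) fun n P => ?_
  exact finite_of_encard_le_coe (encard_inter_smul_le_of_mem_hullSet hU hℓ P.2.1 _)

theorem measurable_encard_inter_phull (hΛ : RelSep Λ) {s : Set G} (hs : MeasurableSet s) :
    Measurable fun P : phull Λ => ((P.1.1 ∩ s).encard : ℝ≥0∞) := by
  simp_rw [← CF.countMeasure_apply _ hs]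
  exact (Measure.measurable_coe hs).comp (measurable_countMeasure_phull hΛ)

theorem intensity_apply (hΛ : RelSep Λ) {s : Set G} (hs : MeasurableSet s) :
    intensity μ s = ∫⁻ P, ((P.1.1 ∩ s).encard : ℝ≥0∞) ∂μ := by
  rw [intensity, Measure.bind_apply hs (measurable_countMeasure_phull hΛ).aemeasurable]
  simp_rw [CF.countMeasure_apply _ hs]

theorem lintegral_intensity (hΛ : RelSep Λ) {g : G → ℝ≥0∞} (hg : Measurable g) :
    ∫⁻ x, g x ∂intensity μ = ∫⁻ P, ∑' x : P.1.1, g x ∂μ := by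
  rw [intensity, Measure.lintegral_bind (measurable_countMeasure_phull hΛ).aemeasurable
    hg.aemeasurable]
  simp_rw [CF.lintegral_countMeasure _ hg]

theorem isMulLeftInvariant_intensity (hΛ : RelSep Λ) (hμ : IsInvariantMeasure Λ μ) :
    (intensity μ).IsMulLeftInvariant := by
  refine ⟨fun g => Measure.ext fun s hs => ?_⟩
  have hpre : (g * ·) ⁻¹' s = g⁻¹ • s := by simpa using preimage_smul g s
  rw [Measure.map_apply (measurable_const_mul g) hs, hpre, intensity_apply hΛ (hs.const_smul _),
    intensity_apply hΛ hs]
  conv_rhs => rw [← hμ g]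
  rw [lintegral_map (measurable_encard_inter_phull hΛ hs) (measurable_phullSmul g)]
  refine lintegral_congr fun P => ?_
  simp only [phullSmul, CF.smul]
  rw [← smul_inv_smul g s, ← smul_set_inter, encard_smul_set, inv_smul_smul]

theorem isFiniteMeasureOnCompacts_intensity (hΛ : RelSep Λ) [IsFiniteMeasure μ] :
    IsFiniteMeasureOnCompacts (intensity μ) := by
  obtain ⟨U, hU, hne, ℓ, hℓ⟩ := id hΛ
  have hwindow : ∀ x : G, intensity μ (x • U) ≤ ℓ * μ univ := fun x => by
    rw [intensity_apply hΛ (hU.smul x).measurableSet, ← lintegral_const]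
    exact lintegral_mono fun P =>
      (ENat.toENNReal_le.mpr (encard_inter_smul_le_of_mem_hullSet hU hℓ P.2.1 x)).trans_eq
        (ENat.toENNReal_coe ℓ)
  refine ⟨fun K hK => ?_⟩
  obtain ⟨t, ht⟩ := hK.elim_finite_subcover (fun n => TopologicalSpace.denseSeq G n • U)
    (fun n => hU.smul _)
    ((TopologicalSpace.denseRange_denseSeq G).iUnion_smul_eq_univ hU hne ▸ subset_univ K)
  calc intensity μ K ≤ ∑ n ∈ t, intensity μ (TopologicalSpace.denseSeq G n • U) :=
        (measure_mono ht).trans (measure_biUnion_finset_le t _)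
    _ ≤ ∑ n ∈ t, ℓ * μ univ := Finset.sum_le_sum fun n _ => hwindow _
    _ < ⊤ := ENNReal.sum_lt_top.mpr fun _ _ =>
        ENNReal.mul_lt_top (ENNReal.natCast_lt_top ℓ) (measure_lt_top μ _)

theorem integral_intensity (hΛ : RelSep Λ) [IsFiniteMeasure μ] {f : G → ℝ} (hf : Continuous f)
    (hfc : HasCompactSupport f) (hf0 : 0 ≤ f) :
    ∫ x, f x ∂intensity μ = ∫ P, ∑' x : P.1.1, f x ∂μ := by
  have := isFiniteMeasureOnCompacts_intensity hΛ (μ := μ)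
  have hg : Measurable fun x => ENNReal.ofReal (f x) := ENNReal.measurable_ofReal.comp hf.measurable
  have hφ : Measurable fun P : phull Λ => ∑' x : P.1.1, ENNReal.ofReal (f x) := by
    simp_rw [← CF.lintegral_countMeasure _ hg]
    exact (Measure.measurable_lintegral hg).comp (measurable_countMeasure_phull hΛ)
  have hfin : ∫⁻ P, ∑' x : P.1.1, ENNReal.ofReal (f x) ∂μ ≠ ⊤ :=
    (lintegral_intensity hΛ hg ▸ (hf.integrable_of_hasCompactSupport hfc).lintegral_lt_top).ne
  calc ∫ x, f x ∂intensity μ = (∫⁻ x, ENNReal.ofReal (f x) ∂intensity μ).toReal :=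
        integral_eq_lintegral_of_nonneg_ae (.of_forall hf0) hf.aestronglyMeasurable
    _ = ∫ P, (∑' x : P.1.1, ENNReal.ofReal (f x)).toReal ∂μ := by
        rw [lintegral_intensity hΛ hg, integral_toReal hφ.aemeasurable (ae_lt_top hφ hfin)]
    _ = ∫ P, ∑' x : P.1.1, f x ∂μ := by
        simp_rw [ENNReal.tsum_toReal_eq fun _ => ENNReal.ofReal_ne_top,
          ENNReal.toReal_ofReal (hf0 _)]

theorem intensity_eq_smul [LocallyCompactSpace G] (hΛ : RelSep Λ) [IsFiniteMeasure μ]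
    (hμ : IsInvariantMeasure Λ μ) (m : Measure G) [m.IsHaarMeasure] (μ₀ : Measure (transv Λ))
    [IsFiniteMeasure μ₀] (htrans : IsTransverseMeasure m Λ μ μ₀) :
    intensity μ = μ₀ univ • m := by
  have := isFiniteMeasureOnCompacts_intensity hΛ (μ := μ)
  have := isMulLeftInvariant_intensity hΛ hμ
  obtain ⟨f, hfc, hf0, hf1⟩ := exists_continuous_nonneg_pos (1 : G)
  have hfm : ∫ x, f x ∂m ≠ 0 :=
    (f.continuous.integral_pos_of_hasCompactSupport_nonneg_nonzero hfc hf0 hf1).ne'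
  have hc : (Measure.haarScalarFactor (intensity μ) m : ℝ) = μ₀.real univ := by
    rw [Measure.haarScalarFactor_eq_integral_div _ _ f.continuous hfc hfm,
      integral_intensity hΛ f.continuous hfc hf0, htrans.integral_tsum_eq f.continuous hfc,
      mul_div_cancel_right₀ _ hfm]
  have hc' : (Measure.haarScalarFactor (intensity μ) m : ℝ≥0∞) = μ₀ univ := by
    rw [← ENNReal.ofReal_coe_nnreal, hc, measureReal_def,
      ENNReal.ofReal_toReal (measure_ne_top _ _)]
  conv_lhs => rw [Measure.isMulLeftInvariant_eq_smul (intensity μ) m]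
  rw [← hc', Measure.coe_nnreal_smul]

end Intensity

theorem statement9_general {G : Type*} [TopologicalSpace G] [Group G] [IsTopologicalGroup G]
    [T2Space G] [LocallyCompactSpace G] [SecondCountableTopology G]
    [MeasurableSpace G] [BorelSpace G]
    (m : Measure G) [m.IsHaarMeasure]
    (Λ : Set G) (hΛ : RelSep Λ)
    (μ : Measure ↥(phull Λ)) [IsFiniteMeasure μ] (hμ0 : μ ≠ 0)
    (hμinv : IsInvariantMeasure Λ μ)
    (μ₀ : Measure ↥(transv Λ)) [IsFiniteMeasure μ₀]
    (htrans : IsTransverseMeasure m Λ μ μ₀)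
    (S : Set G) (hS : MeasurableSet S) (hS0 : 0 < m S) (hSfin : m S < ⊤) :
    (μ Set.univ / μ₀ Set.univ)⁻¹ =
      (μ Set.univ)⁻¹ *
        ∫⁻ P : ↥(phull Λ), ((P.1.1 ∩ S).encard : ℝ≥0∞) / m S ∂μ := by
  have hμ : μ univ ≠ 0 := Measure.measure_univ_ne_zero.mpr hμ0
  have hmean : ∫⁻ P, ((P.1.1 ∩ S).encard : ℝ≥0∞) / m S ∂μ = μ₀ univ := by
    simp_rw [div_eq_mul_inv]
    rw [lintegral_mul_const _ (measurable_encard_inter_phull hΛ hS), ← intensity_apply hΛ hS,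
      intensity_eq_smul hΛ hμinv m μ₀ htrans, Measure.smul_apply, smul_eq_mul, mul_assoc,
      ENNReal.mul_inv_cancel hS0.ne' hSfin.ne, mul_one]
  rw [hmean, ENNReal.inv_div (.inl (measure_ne_top μ₀ _)) (.inr hμ), ENNReal.div_eq_inv_mul]

/-- Averaging formula for the covolume: with `μ` a nonzero finite invariant measure on the
punctured hull and `μ₀` its transverse measure, for every Borel set `S ⊆ G` with
`0 < m(S) < ∞` one has `1/covol_μ(Λ) = (1/μ(Ω*(Λ))) ∫ |P ∩ S|/m(S) dμ(P)`, where
`covol_μ(Λ) = μ(Ω*(Λ))/μ₀(Ω₀(Λ))`. -/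
theorem statement9 {G : Type*} [TopologicalSpace G] [Group G] [IsTopologicalGroup G]
    [T2Space G] [LocallyCompactSpace G] [SecondCountableTopology G]
    [MeasurableSpace G] [BorelSpace G]
    (m : Measure G) [m.IsHaarMeasure] [m.IsMulRightInvariant]
    (Λ : Set G) (hΛ : RelSep Λ)
    (μ : Measure ↥(phull Λ)) [IsFiniteMeasure μ] (hμ0 : μ ≠ 0)
    (hμinv : IsInvariantMeasure Λ μ)
    (μ₀ : Measure ↥(transv Λ)) [IsFiniteMeasure μ₀] (hμ₀0 : μ₀ ≠ 0)
    (htrans : IsTransverseMeasure m Λ μ μ₀)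
    (S : Set G) (hS : MeasurableSet S) (hS0 : 0 < m S) (hSfin : m S < ⊤) :
    (μ Set.univ / μ₀ Set.univ)⁻¹ =
      (μ Set.univ)⁻¹ *
        ∫⁻ P : ↥(phull Λ), ((P.1.1 ∩ S).encard : ℝ≥0∞) / m S ∂μ :=
  statement9_general m Λ hΛ μ hμ0 hμinv μ₀ htrans S hS hS0 hSfin
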